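/- For all nonzero vectors a, b in H, the function f : [0,1] → ℝ defined by f(q) = ω_q(a⊗b) attains its maximum value uniquely at q₀ = |⟨a,b⟩|/(‖a‖·‖b‖), with f(q₀) = ‖a‖·‖b‖; that is, f(q₀) = ‖a‖·‖b‖ and f(q) < ‖a‖·‖b‖ for every q ∈ [0,1] with q ≠ q₀. -/

import Mathlib

open scoped ComplexInnerProductSpace

/-- The rank-one operator `a ⊗ b` on a complex Hilbert space, acting by
`(a ⊗ b) x = ⟨x, a⟩ · b` (i.e. `x ↦ ⟪a, x⟫ • b` in Mathlib's convention, where the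
inner product is conjugate-linear in the first slot). -/
noncomputable def rankOne {H : Type*} [NormedAddCommGroup H] [InnerProductSpace ℂ H]
    (a b : H) : H →L[ℂ] H :=
  (innerSL ℂ a).smulRight b

/-- The `q`-numerical radius `ω_q(A) = sup { |⟨Ax, y⟩| : ‖x‖ = ‖y‖ = 1, ⟨x, y⟩ = q }`. -/
noncomputable def qRad {H : Type*} [NormedAddCommGroup H] [InnerProductSpace ℂ H]
    (q : ℝ) (A : H →L[ℂ] H) : ℝ :=
  sSup {r : ℝ | ∃ x y : H, ‖x‖ = 1 ∧ ‖y‖ = 1 ∧ ⟪x, y⟫ = (q : ℂ) ∧ r = ‖⟪A x, y⟫‖}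

/-!
Normalise `a` and `b` to unit vectors `u`, `v`, so that `a ⊗ b = ‖a‖‖b‖ (u ⊗ v)` and
`q₀ = |⟨u, v⟩|`. For unit vectors, `d(x, y) = arccos |⟨x, y⟩|` is the Fubini–Study metric on
lines. If `‖x‖ = ‖y‖ = 1` and `⟨x, y⟩ = q`, write `α = d(x, u)`, `β = d(v, y)`; the triangle
inequality gives `|arccos q - arccos q₀| ≤ α + β ≤ π`, hence
`|⟨(u ⊗ v) x, y⟩| = cos α cos β = (cos (α + β) + cos (α - β)) / 2
  ≤ (1 + cos (arccos q - arccos q₀)) / 2`,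
which is `< 1` when `q ≠ q₀`. At `q₀` the bound `1` is attained by a unimodular multiple of `u`
paired with `v`.
-/

section FubiniStudy

variable {H : Type*} [NormedAddCommGroup H] [InnerProductSpace ℂ H]

/-- For unit vectors, the Fubini–Study distance between the lines `ℂ x` and `ℂ y`. -/
noncomputable def fsAngle (x y : H) : ℝ := Real.arccos ‖⟪x, y⟫‖

lemma norm_inner_le_one_of_norm_eq_one {x y : H} (hx : ‖x‖ = 1) (hy : ‖y‖ = 1) :
    ‖⟪x, y⟫‖ ≤ 1 := by
  simpa [hx, hy] using norm_inner_le_norm (𝕜 := ℂ) x y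

lemma fsAngle_comm (x y : H) : fsAngle x y = fsAngle y x := by
  rw [fsAngle, fsAngle, norm_inner_symm]

lemma fsAngle_nonneg (x y : H) : 0 ≤ fsAngle x y := Real.arccos_nonneg _

lemma fsAngle_le_pi_div_two (x y : H) : fsAngle x y ≤ Real.pi / 2 :=
  Real.arccos_le_pi_div_two.2 (norm_nonneg _)

lemma cos_fsAngle {x y : H} (hx : ‖x‖ = 1) (hy : ‖y‖ = 1) :
    Real.cos (fsAngle x y) = ‖⟪x, y⟫‖ :=
  Real.cos_arccos (by linarith [norm_nonneg ⟪x, y⟫]) (norm_inner_le_one_of_norm_eq_one hx hy)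

lemma inner_sub_inner_smul_sub_inner_smul {x : H} (hx : ‖x‖ = 1) (u v : H) :
    ⟪u - ⟪x, u⟫ • x, v - ⟪x, v⟫ • x⟫ = ⟪u, v⟫ - ⟪u, x⟫ * ⟪x, v⟫ := by
  have hxx : ⟪x, x⟫ = (1 : ℂ) := by simp [hx]
  simp only [inner_sub_left, inner_sub_right, inner_smul_left, inner_smul_right, hxx,
    inner_conj_symm]
  ring

lemma norm_sub_inner_smul {x u : H} (hx : ‖x‖ = 1) (hu : ‖u‖ = 1) :
    ‖u - ⟪x, u⟫ • x‖ = Real.sin (fsAngle u x) := by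
  have h := inner_sub_inner_smul_sub_inner_smul hx u u
  have huu : ⟪u, u⟫ = (1 : ℂ) := by simp [hu]
  have hux : ⟪u, x⟫ * ⟪x, u⟫ = ((‖⟪u, x⟫‖ ^ 2 : ℝ) : ℂ) := by
    rw [Complex.ofReal_pow, ← Complex.mul_conj', inner_conj_symm]
  rw [huu, hux] at h
  rw [fsAngle, Real.sin_arccos, norm_eq_sqrt_re_inner (𝕜 := ℂ), h]
  norm_cast

lemma fsAngle_le_add {u x v : H} (hu : ‖u‖ = 1) (hx : ‖x‖ = 1) (hv : ‖v‖ = 1) :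
    fsAngle u v ≤ fsAngle u x + fsAngle x v := by
  set α := fsAngle u x
  set β := fsAngle x v
  have hsplit : ⟪u, v⟫ = ⟪u, x⟫ * ⟪x, v⟫ + ⟪u - ⟪x, u⟫ • x, v - ⟪x, v⟫ • x⟫ := by
    rw [inner_sub_inner_smul_sub_inner_smul hx]; ring
  have hperp : ‖⟪u - ⟪x, u⟫ • x, v - ⟪x, v⟫ • x⟫‖ ≤ Real.sin α * Real.sin β := by
    have h := norm_inner_le_norm (𝕜 := ℂ) (u - ⟪x, u⟫ • x) (v - ⟪x, v⟫ • x)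
    rwa [norm_sub_inner_smul hx hu, norm_sub_inner_smul hx hv, fsAngle_comm v x] at h
  have hcos : Real.cos (α + β) ≤ ‖⟪u, v⟫‖ := by
    have h := norm_sub_norm_le (⟪u, x⟫ * ⟪x, v⟫) (-⟪u - ⟪x, u⟫ • x, v - ⟪x, v⟫ • x⟫)
    rw [sub_neg_eq_add, ← hsplit, norm_neg, norm_mul] at h
    rw [Real.cos_add, cos_fsAngle hu hx, cos_fsAngle hx hv]
    linarith
  calc fsAngle u v ≤ Real.arccos (Real.cos (α + β)) := Real.arccos_le_arccos hcos
    _ = α + β := Real.arccos_cos (by positivity [fsAngle_nonneg u x, fsAngle_nonneg x v])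
        (by linarith [fsAngle_le_pi_div_two u x, fsAngle_le_pi_div_two x v])

lemma abs_sub_fsAngle_le {x y u v : H} (hx : ‖x‖ = 1) (hy : ‖y‖ = 1) (hu : ‖u‖ = 1)
    (hv : ‖v‖ = 1) : |fsAngle x y - fsAngle u v| ≤ fsAngle x u + fsAngle v y := by
  have := fsAngle_le_add hx hu hy
  have := fsAngle_le_add hu hv hy
  have := fsAngle_le_add hu hx hv
  have := fsAngle_le_add hx hy hv
  rw [fsAngle_comm u x, fsAngle_comm y v] at *
  rw [abs_sub_le_iff]
  constructor <;> linarith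

lemma norm_inner_mul_norm_inner_le {x y u v : H} (hx : ‖x‖ = 1) (hy : ‖y‖ = 1) (hu : ‖u‖ = 1)
    (hv : ‖v‖ = 1) :
    ‖⟪x, u⟫‖ * ‖⟪v, y⟫‖ ≤ (1 + Real.cos (fsAngle x y - fsAngle u v)) / 2 := by
  set α := fsAngle x u
  set β := fsAngle v y
  have hcos : Real.cos (α + β) ≤ Real.cos (fsAngle x y - fsAngle u v) := by
    rw [← Real.cos_abs (fsAngle x y - fsAngle u v)]
    exact Real.cos_le_cos_of_nonneg_of_le_pi (abs_nonneg _)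
      (by linarith [fsAngle_le_pi_div_two x u, fsAngle_le_pi_div_two v y])
      (abs_sub_fsAngle_le hx hy hu hv)
  have hprod : Real.cos α * Real.cos β = (Real.cos (α + β) + Real.cos (α - β)) / 2 := by
    rw [Real.cos_add, Real.cos_sub]; ring
  rw [← cos_fsAngle hx hu, ← cos_fsAngle hv hy, hprod]
  linarith [Real.cos_le_one (α - β)]

end FubiniStudy

section QNumericalRadius

variable {H : Type*} [NormedAddCommGroup H] [InnerProductSpace ℂ H]

lemma qRad_le {q C : ℝ} {A : H →L[ℂ] H} (hC : 0 ≤ C)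
    (h : ∀ x y : H, ‖x‖ = 1 → ‖y‖ = 1 → ⟪x, y⟫ = (q : ℂ) → ‖⟪A x, y⟫‖ ≤ C) :
    qRad q A ≤ C :=
  Real.sSup_le (by rintro r ⟨x, y, hx, hy, hxy, rfl⟩; exact h x y hx hy hxy) hC

lemma le_qRad {q : ℝ} (A : H →L[ℂ] H) {x y : H} (hx : ‖x‖ = 1) (hy : ‖y‖ = 1)
    (hxy : ⟪x, y⟫ = (q : ℂ)) : ‖⟪A x, y⟫‖ ≤ qRad q A := by
  refine le_csSup ⟨‖A‖, ?_⟩ ⟨x, y, hx, hy, hxy, rfl⟩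
  rintro r ⟨x', y', hx', hy', -, rfl⟩
  simpa [hx', hy'] using (norm_inner_le_norm (𝕜 := ℂ) (A x') y').trans
    (mul_le_mul_of_nonneg_right (A.le_opNorm x') (norm_nonneg y'))

lemma qRad_real_smul (q : ℝ) {r : ℝ} (hr : 0 ≤ r) (A : H →L[ℂ] H) :
    qRad q ((r : ℂ) • A) = r * qRad q A := by
  rw [qRad, qRad, ← smul_eq_mul, ← Real.sSup_smul_of_nonneg hr]
  congr 1
  ext s
  simp only [Set.mem_ofPred_eq, Set.mem_smul_set, smul_eq_mul]
  constructor
  · rintro ⟨x, y, hx, hy, hxy, rfl⟩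
    refine ⟨_, ⟨x, y, hx, hy, hxy, rfl⟩, ?_⟩
    simp [abs_of_nonneg hr]
  · rintro ⟨_, ⟨x, y, hx, hy, hxy, rfl⟩, rfl⟩
    refine ⟨x, y, hx, hy, hxy, ?_⟩
    simp [abs_of_nonneg hr]

end QNumericalRadius

section RankOne

variable {H : Type*} [NormedAddCommGroup H] [InnerProductSpace ℂ H]

lemma norm_inner_rankOne_apply (a b x y : H) :
    ‖⟪rankOne a b x, y⟫‖ = ‖⟪x, a⟫‖ * ‖⟪b, y⟫‖ := by
  simp [rankOne, norm_inner_symm x a, mul_comm]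

lemma rankOne_eq_smul_rankOne_normalize {a b : H} (ha : a ≠ 0) (hb : b ≠ 0) :
    rankOne a b = ((‖a‖ * ‖b‖ : ℝ) : ℂ) •
      rankOne ((‖a‖⁻¹ : ℂ) • a) ((‖b‖⁻¹ : ℂ) • b) := by
  ext x
  have ha' : (‖a‖ : ℂ) ≠ 0 := by simpa using ha
  have hb' : (‖b‖ : ℂ) ≠ 0 := by simpa using hb
  simp only [rankOne, FunLike.coe_smul, Pi.smul_apply, ContinuousLinearMap.smulRight_apply,
    innerSL_apply_apply, inner_smul_left, smul_smul, Complex.conj_ofReal, map_inv₀]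
  congr 1
  push_cast
  field_simp

lemma norm_inner_normalize (a b : H) :
    ‖⟪(‖a‖⁻¹ : ℂ) • a, (‖b‖⁻¹ : ℂ) • b⟫‖ = ‖⟪a, b⟫‖ / (‖a‖ * ‖b‖) := by
  simp only [inner_smul_left, inner_smul_right, norm_mul, RCLike.norm_conj, norm_inv,
    Complex.norm_real, norm_norm]
  ring

lemma exists_norm_eq_one_conj_mul_eq_norm (c : ℂ) :
    ∃ ζ : ℂ, ‖ζ‖ = 1 ∧ (starRingEnd ℂ) ζ * c = ‖c‖ := by
  refine ⟨Complex.exp (c.arg * Complex.I), Complex.norm_exp_ofReal_mul_I _, ?_⟩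
  nth_rewrite 2 [← Complex.norm_mul_exp_arg_mul_I c]
  rw [← Complex.exp_conj, mul_left_comm, ← Complex.exp_add]
  simp

lemma qRad_norm_inner_rankOne {u v : H} (hu : ‖u‖ = 1) (hv : ‖v‖ = 1) :
    qRad ‖⟪u, v⟫‖ (rankOne u v) = 1 := by
  obtain ⟨ζ, hζ, hζuv⟩ := exists_norm_eq_one_conj_mul_eq_norm ⟪u, v⟫
  refine le_antisymm (qRad_le zero_le_one fun x y hx hy _ => ?_) ?_
  · rw [norm_inner_rankOne_apply]
    exact mul_le_one₀ (norm_inner_le_one_of_norm_eq_one hx hu) (norm_nonneg _)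
      (norm_inner_le_one_of_norm_eq_one hv hy)
  · have hζu : ‖ζ • u‖ = 1 := by rw [norm_smul, hζ, hu, one_mul]
    have h := le_qRad (rankOne u v) hζu hv (by rw [inner_smul_left, hζuv])
    simpa [norm_inner_rankOne_apply, inner_smul_left, hζ, hu, hv] using h

lemma qRad_rankOne_lt_one {u v : H} (hu : ‖u‖ = 1) (hv : ‖v‖ = 1) {q : ℝ}
    (hq : q ∈ Set.Icc (0 : ℝ) 1) (hne : q ≠ ‖⟪u, v⟫‖) : qRad q (rankOne u v) < 1 := by
  set θ := Real.arccos q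
  have hθ : θ ≠ fsAngle u v := fun h => hne <|
    Real.arccos_injOn ⟨by linarith [hq.1], hq.2⟩
      ⟨by linarith [norm_nonneg ⟪u, v⟫], norm_inner_le_one_of_norm_eq_one hu hv⟩ h
  have hcos : Real.cos (θ - fsAngle u v) < 1 := by
    refine (Real.cos_le_one _).lt_of_ne fun h => hθ (sub_eq_zero.1 ?_)
    refine (Real.cos_eq_one_iff_of_lt_of_lt ?_ ?_).1 h <;>
      linarith [Real.arccos_nonneg q, Real.arccos_le_pi q, fsAngle_nonneg u v,
        fsAngle_le_pi_div_two u v, Real.pi_pos]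
  refine lt_of_le_of_lt (qRad_le (C := (1 + Real.cos (θ - fsAngle u v)) / 2)
    (by linarith [Real.neg_one_le_cos (θ - fsAngle u v)]) fun x y hx hy hxy => ?_) (by linarith)
  have hθxy : fsAngle x y = θ := by simp [fsAngle, hxy, abs_of_nonneg hq.1, θ]
  rw [norm_inner_rankOne_apply, ← hθxy]
  exact norm_inner_mul_norm_inner_le hx hy hu hv

end RankOne

theorem stmt9_general {H : Type*} [NormedAddCommGroup H] [InnerProductSpace ℂ H]
    (a b : H) (ha : a ≠ 0) (hb : b ≠ 0) :
    qRad (‖⟪a, b⟫‖ / (‖a‖ * ‖b‖)) (rankOne a b) = ‖a‖ * ‖b‖ ∧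
      ∀ q ∈ Set.Icc (0 : ℝ) 1, q ≠ ‖⟪a, b⟫‖ / (‖a‖ * ‖b‖) →
        qRad q (rankOne a b) < ‖a‖ * ‖b‖ := by
  have hu : ‖(‖a‖⁻¹ : ℂ) • a‖ = 1 := norm_smul_inv_norm ha
  have hv : ‖(‖b‖⁻¹ : ℂ) • b‖ = 1 := norm_smul_inv_norm hb
  have hab : 0 < ‖a‖ * ‖b‖ := mul_pos (norm_pos_iff.2 ha) (norm_pos_iff.2 hb)
  rw [rankOne_eq_smul_rankOne_normalize ha hb, ← norm_inner_normalize]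
  refine ⟨?_, fun q hq hne => ?_⟩
  · rw [qRad_real_smul _ hab.le, qRad_norm_inner_rankOne hu hv, mul_one]
  · rw [qRad_real_smul _ hab.le]
    exact mul_lt_of_lt_one_right hab (qRad_rankOne_lt_one hu hv hq hne)

/-- The function `q ↦ ω_q(a ⊗ b)` attains its maximum value `‖a‖ · ‖b‖` on `[0, 1]`
uniquely at `q₀ = |⟨a, b⟩| / (‖a‖ · ‖b‖)`. -/
theorem stmt9 {H : Type*} [NormedAddCommGroup H] [InnerProductSpace ℂ H] [CompleteSpace H]
    (hdim : 2 ≤ Module.rank ℂ H) (a b : H) (ha : a ≠ 0) (hb : b ≠ 0) :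
    qRad (‖⟪a, b⟫‖ / (‖a‖ * ‖b‖)) (rankOne a b) = ‖a‖ * ‖b‖ ∧
      ∀ q ∈ Set.Icc (0 : ℝ) 1, q ≠ ‖⟪a, b⟫‖ / (‖a‖ * ‖b‖) →
        qRad q (rankOne a b) < ‖a‖ * ‖b‖ :=
  stmt9_general a b ha hb
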